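/- Let φ : ℝ × (0, ∞) → ℝ be an arbitrary real-valued function. Then for all r > 0 and all (s,r) with φ(s,r) > 0, 1/( φ(s,r) + K_{n=1}^∞ (n²r²/φ(s,r)) ) = (1/r)·∫_0^∞ e^{−(φ(s,r)/r)·x}/cosh x dx, where φ(s,r) + K_{n=1}^∞ (n²r²/φ(s,r)) denotes the limit of the convergents of the generalized continued fraction with integer part φ(s,r), partial numerators a_n = n²r² and partial denominators b_n = φ(s,r). -/

import Mathlib

open Filter Real

/-- Numerators of the convergents of a generalized continued fraction with
integer part `b₀`, partial numerators `a n` and partial denominators `b n` (for `n ≥ 1`). -/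
noncomputable def cfNum (b₀ : ℝ) (a b : ℕ → ℝ) : ℕ → ℝ
  | 0 => b₀
  | 1 => b 1 * b₀ + a 1
  | n + 2 => b (n + 2) * cfNum b₀ a b (n + 1) + a (n + 2) * cfNum b₀ a b n

/-- Denominators of the convergents of a generalized continued fraction. -/
noncomputable def cfDen (a b : ℕ → ℝ) : ℕ → ℝ
  | 0 => 1
  | 1 => b 1
  | n + 2 => b (n + 2) * cfDen a b (n + 1) + a (n + 2) * cfDen a b n

/-- `IsCFLimit b₀ a b L` means: the convergents of the generalized continued fraction
`b₀ + a 1 / (b 1 + a 2 / (b 2 + ⋯))` tend to `L`. -/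
def IsCFLimit (b₀ : ℝ) (a b : ℕ → ℝ) (L : ℝ) : Prop :=
  Filter.Tendsto (fun n => cfNum b₀ a b n / cfDen a b n) Filter.atTop (nhds L)

/-! Let `I n = ∫₀^∞ e^{-c x} tanhⁿ x sech x dx` with `c = t / r`. Integration by parts gives
`c I 0 = 1 - I 1` and `c I (m+1) = (m+1) I m - (m+2) I (m+2)`, so `T m = (m+1) r I (m+1) / I m`
are positive solutions of the tail recursion `T m (t + T (m+1)) = (m+1)² r²` of
`t + K (n² r² / t)`, with `t + T 0 = r / I 0`. For a continued fraction with positive terms,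
the value built from any such tails is a weighted mediant of consecutive convergents, hence
equals their limit. -/

open MeasureTheory Set

section ContinuedFraction

variable {b₀ : ℝ} {a b T : ℕ → ℝ}

theorem cfDen_pos (ha : ∀ n, 0 ≤ a n) (hb : ∀ n, 0 < b n) (n : ℕ) : 0 < cfDen a b n := by
  induction n using Nat.twoStepInduction with
  | zero => simp [cfDen]
  | one => simpa [cfDen] using hb 1
  | more n ih ih' =>
    have := hb (n + 2)
    have := ha (n + 2)
    rw [cfDen]
    positivity

/-- With `T` the tails `T n = a (n+1) / (b (n+1) + T (n+1))`, the value `b₀ + T 0` is a weighted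
mediant of two consecutive convergents. -/
theorem add_tail_zero_mul_cfDen (hT : ∀ n, T n * (b (n + 1) + T (n + 1)) = a (n + 1)) (n : ℕ) :
    (b₀ + T 0) * (cfDen a b (n + 1) + T (n + 1) * cfDen a b n) =
      cfNum b₀ a b (n + 1) + T (n + 1) * cfNum b₀ a b n := by
  induction n with
  | zero =>
    simp only [cfNum, cfDen, zero_add]
    linear_combination hT 0
  | succ n ih =>
    rw [cfNum, cfDen]
    linear_combination (b (n + 2) + T (n + 2)) * ih +
      (cfNum b₀ a b n - (b₀ + T 0) * cfDen a b n) * hT (n + 1)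

theorem abs_mediant_sub_le {x x' y y' w : ℝ} (hy : 0 < y) (hy' : 0 < y') (hw : 0 ≤ w) :
    |(x' + w * x) / (y' + w * y) - x' / y'| ≤ |x / y - x' / y'| := by
  have hd : 0 < y' + w * y := by positivity
  have hwy : 0 ≤ w * y := by positivity
  have hfrac : (x' + w * x) / (y' + w * y) - x' / y' =
      w * y / (y' + w * y) * (x / y - x' / y') := by
    field_simp
    ring
  rw [hfrac, abs_mul, abs_of_nonneg (by positivity)]
  exact mul_le_of_le_one_left (abs_nonneg _) ((div_le_one hd).2 (by linarith))

/-- Being a mediant, `b₀ + T 0` lies between consecutive convergents, whose gaps tend to zero. -/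
theorem IsCFLimit.eq_add_tail_zero {L : ℝ} (h : IsCFLimit b₀ a b L) (ha : ∀ n, 0 ≤ a n)
    (hb : ∀ n, 0 < b n) (hT₀ : ∀ n, 0 ≤ T n)
    (hT : ∀ n, T n * (b (n + 1) + T (n + 1)) = a (n + 1)) : L = b₀ + T 0 := by
  set x := fun n => cfNum b₀ a b n / cfDen a b n
  have hx : Tendsto (fun n => x (n + 1)) atTop (nhds L) := h.comp (tendsto_add_atTop_nat 1)
  have hstep : Tendsto (fun n => |x n - x (n + 1)|) atTop (nhds 0) := by
    simpa using (h.sub hx).abs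
  have hclose : ∀ n, |b₀ + T 0 - x (n + 1)| ≤ |x n - x (n + 1)| := fun n => by
    have hq := cfDen_pos ha hb n
    have hq' := cfDen_pos ha hb (n + 1)
    have hw := hT₀ (n + 1)
    rw [eq_div_of_mul_eq (by positivity) (add_tail_zero_mul_cfDen hT n)]
    exact abs_mediant_sub_le hq hq' hw
  have hx' : Tendsto (fun n => x (n + 1)) atTop (nhds (b₀ + T 0)) := by
    have := squeeze_zero (fun n => abs_nonneg _) hclose hstep
    simpa using
      (tendsto_const_nhds (x := b₀ + T 0)).sub ((tendsto_zero_iff_abs_tendsto_zero _).2 this)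
  exact tendsto_nhds_unique hx hx'

end ContinuedFraction

section TanhPowSech

noncomputable def tanhPowSech (n : ℕ) (x : ℝ) : ℝ := sinh x ^ n / cosh x ^ (n + 1)

theorem continuous_tanhPowSech (n : ℕ) : Continuous (tanhPowSech n) :=
  (continuous_sinh.pow n).div (continuous_cosh.pow (n + 1)) fun x => by positivity

theorem tanhPowSech_nonneg (n : ℕ) {x : ℝ} (hx : 0 ≤ x) : 0 ≤ tanhPowSech n x := by
  have := sinh_nonneg_iff.2 hx
  unfold tanhPowSech
  positivity

theorem tanhPowSech_pos (n : ℕ) {x : ℝ} (hx : 0 < x) : 0 < tanhPowSech n x := by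
  have := sinh_pos_iff.2 hx
  unfold tanhPowSech
  positivity

theorem tanhPowSech_le_one (n : ℕ) {x : ℝ} (hx : 0 ≤ x) : tanhPowSech n x ≤ 1 := by
  rw [tanhPowSech, div_le_one (by positivity)]
  calc sinh x ^ n ≤ cosh x ^ n := pow_le_pow_left₀ (sinh_nonneg_iff.2 hx) (sinh_lt_cosh x).le n
    _ ≤ cosh x ^ (n + 1) := pow_le_pow_right₀ (one_le_cosh x) n.le_succ

theorem hasDerivAt_tanhPowSech (n : ℕ) (x : ℝ) :
    HasDerivAt (tanhPowSech n)
      (n * tanhPowSech (n - 1) x - (n + 1) * tanhPowSech (n + 1) x) x := by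
  have hcosh : cosh x ≠ 0 := (cosh_pos x).ne'
  have hcoshPow : cosh x ^ (n + 1) ≠ 0 := pow_ne_zero _ hcosh
  refine (((hasDerivAt_sinh x).pow n).div ((hasDerivAt_cosh x).pow (n + 1)) hcoshPow).congr_deriv ?_
  simp only [tanhPowSech, Pi.pow_apply]
  rcases n with _ | m
  · field_simp
    ring
  · simp only [Nat.add_sub_cancel]
    push_cast
    field_simp
    ring

end TanhPowSech

section Laplace

variable {c : ℝ}

noncomputable def laplaceTanhPowSech (c : ℝ) (n : ℕ) : ℝ :=
  ∫ x in Ioi 0, exp (-c * x) * tanhPowSech n x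

theorem integrableOn_exp_mul_tanhPowSech (hc : 0 < c) (n : ℕ) :
    IntegrableOn (fun x => exp (-c * x) * tanhPowSech n x) (Ioi 0) := by
  refine (exp_neg_integrableOn_Ioi 0 hc).mono' ?_ ?_
  · exact ((continuous_exp.comp (continuous_const.mul continuous_id)).mul
      (continuous_tanhPowSech n)).aestronglyMeasurable
  · filter_upwards [ae_restrict_mem measurableSet_Ioi] with x hx
    rw [norm_of_nonneg (mul_nonneg (exp_pos _).le (tanhPowSech_nonneg n (le_of_lt hx)))]
    exact mul_le_of_le_one_right (exp_pos _).le (tanhPowSech_le_one n (le_of_lt hx))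

theorem laplaceTanhPowSech_pos (hc : 0 < c) (n : ℕ) : 0 < laplaceTanhPowSech c n := by
  rw [laplaceTanhPowSech, setIntegral_pos_iff_support_of_nonneg_ae _
    (integrableOn_exp_mul_tanhPowSech hc n)]
  · have hsupp :
        Ioi (0 : ℝ) ⊆ Function.support (fun x => exp (-c * x) * tanhPowSech n x) ∩ Ioi 0 :=
      fun x hx => ⟨(mul_pos (exp_pos _) (tanhPowSech_pos n hx)).ne', hx⟩
    exact (by simp : (0 : ENNReal) < volume (Ioi (0 : ℝ))).trans_le (measure_mono hsupp)
  · filter_upwards [ae_restrict_mem measurableSet_Ioi] with x hx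
    exact mul_nonneg (exp_pos _).le (tanhPowSech_nonneg n (le_of_lt hx))

/-- Integration by parts, with `hasDerivAt_tanhPowSech`. -/
theorem laplaceTanhPowSech_recurrence (hc : 0 < c) (n : ℕ) :
    c * laplaceTanhPowSech c n = tanhPowSech n 0 + n * laplaceTanhPowSech c (n - 1)
      - (n + 1) * laplaceTanhPowSech c (n + 1) := by
  set f := fun k x => exp (-c * x) * tanhPowSech k x
  have hderiv : ∀ x ∈ Ici (0 : ℝ), HasDerivAt (f n)
      (n * f (n - 1) x - (n + 1) * f (n + 1) x - c * f n x) x := fun x _ => by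
    have he : HasDerivAt (fun x => exp (-c * x)) (exp (-c * x) * -c) x := by
      simpa using ((hasDerivAt_id x).const_mul (-c)).exp
    refine (he.mul (hasDerivAt_tanhPowSech n x)).congr_deriv ?_
    simp only [f]
    ring
  have hlim : Tendsto (f n) atTop (nhds 0) := by
    have he : Tendsto (fun x => exp (-c * x)) atTop (nhds 0) := tendsto_exp_comp_nhds_zero.2
      (tendsto_neg_atTop_atBot.comp (tendsto_id.const_mul_atTop hc) |>.congr fun x => by simp)
    refine squeeze_zero' ?_ ?_ he
    all_goals filter_upwards [eventually_ge_atTop 0] with x hx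
    · exact mul_nonneg (exp_pos _).le (tanhPowSech_nonneg n hx)
    · exact mul_le_of_le_one_right (exp_pos _).le (tanhPowSech_le_one n hx)
  have hint : ∀ k (a : ℝ), IntegrableOn (fun x => a * f k x) (Ioi 0) :=
    fun k a => (integrableOn_exp_mul_tanhPowSech hc k).const_mul a
  have hibp := integral_Ioi_of_hasDerivAt_of_tendsto' hderiv
    (((hint _ _).sub (hint _ _)).sub (hint _ _)) hlim
  have hdiff : IntegrableOn (fun x => n * f (n - 1) x - (n + 1) * f (n + 1) x) (Ioi 0) :=
    (hint _ _).sub (hint _ _)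
  rw [integral_sub hdiff (hint _ _), integral_sub (hint _ _) (hint _ _),
    integral_const_mul, integral_const_mul, integral_const_mul] at hibp
  simp only [laplaceTanhPowSech, f, mul_zero, exp_zero, one_mul] at hibp ⊢
  linarith

end Laplace

section Tails

variable {c r : ℝ}

/-- The three-term recurrence of `laplaceTanhPowSech c` says that these are the tails of
`c r + K (n² r² / (c r))`. -/
noncomputable def laplaceTail (c r : ℝ) (m : ℕ) : ℝ :=
  (m + 1) * r * laplaceTanhPowSech c (m + 1) / laplaceTanhPowSech c m

theorem laplaceTail_nonneg (hc : 0 < c) (hr : 0 ≤ r) (m : ℕ) : 0 ≤ laplaceTail c r m := by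
  have := laplaceTanhPowSech_pos hc m
  have := laplaceTanhPowSech_pos hc (m + 1)
  unfold laplaceTail
  positivity

theorem laplaceTail_mul_add (hc : 0 < c) (m : ℕ) :
    laplaceTail c r m * (c * r + laplaceTail c r (m + 1)) = ((m + 1 : ℕ) : ℝ) ^ 2 * r ^ 2 := by
  have hrec := laplaceTanhPowSech_recurrence hc (m + 1)
  have h₀ := (laplaceTanhPowSech_pos hc m).ne'
  have h₁ := (laplaceTanhPowSech_pos hc (m + 1)).ne'
  simp only [tanhPowSech, sinh_zero, ne_eq, Nat.add_eq_zero_iff, one_ne_zero, and_false,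
    not_false_eq_true, zero_pow, zero_div, zero_add, Nat.add_sub_cancel] at hrec
  unfold laplaceTail
  field_simp
  push_cast at hrec ⊢
  linear_combination (m + 1) * r ^ 2 * hrec

theorem mul_add_laplaceTail_zero (hc : 0 < c) :
    c * r + laplaceTail c r 0 = r / laplaceTanhPowSech c 0 := by
  have hrec := laplaceTanhPowSech_recurrence hc 0
  have h₀ := (laplaceTanhPowSech_pos hc 0).ne'
  simp only [tanhPowSech, sinh_zero, cosh_zero, pow_zero, zero_add, pow_one, div_one,
    CharP.cast_eq_zero, zero_mul, add_zero, one_mul] at hrec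
  unfold laplaceTail
  field_simp
  push_cast
  linear_combination r * hrec

end Tails

theorem cf_integral_representation_exp (φ : ℝ → ℝ → ℝ) (s r : ℝ) (hr : 0 < r)
    (hφ : 0 < φ s r) (K : ℝ)
    (hK : IsCFLimit 0 (fun n => (n : ℝ) ^ 2 * r ^ 2) (fun _ => φ s r) K) :
    1 / (φ s r + K) =
      (1 / r) * ∫ x in Set.Ioi (0 : ℝ), Real.exp (-(φ s r / r) * x) / Real.cosh x := by
  set c := φ s r / r
  have hc : 0 < c := div_pos hφ hr
  have hcr : c * r = φ s r := div_mul_cancel₀ _ hr.ne'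
  have hKtail : K = 0 + laplaceTail c r 0 :=
    hK.eq_add_tail_zero (fun n => by positivity) (fun _ => hφ) (laplaceTail_nonneg hc hr.le)
      fun m => hcr ▸ laplaceTail_mul_add hc m
  have hI : laplaceTanhPowSech c 0 = ∫ x in Ioi 0, exp (-c * x) / cosh x := by
    simp [laplaceTanhPowSech, tanhPowSech, div_eq_mul_inv]
  rw [hKtail, zero_add, ← hcr, mul_add_laplaceTail_zero hc, ← hI]
  have := (laplaceTanhPowSech_pos hc 0).ne'
  field_simp
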